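/- Let g ∈ L^1(a,b). For every ε > 0 there exists x_ε ∈ ℝ such that, setting G_ε = {x_α = x_ε + 2εα : α ∈ ℤ and x_α ∈ (a+ε, b−ε)}, there is a subset G′_ε ⊂ G_ε with ∫_{∪{I_ε(x_α) : x_α ∈ G′_ε}} |g| dt + 2·#(G_ε ∖ G′_ε) ≤ (1/(c_0 ε)) ∫_a^b f(ε ⨍_{I_ε(x)∩(a,b)} |g| dt) dx. -/

import Mathlib

/-!
Put `h x = min (ε ⨍_{I_ε(x) ∩ (a,b)} |g|) 1`, so that `f (ε ⨍ |g|) = c₀ h`.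
Averaging over the shift `s ∈ (0, 2ε]`, the sum of `h` over the points of the lattice
`s + 2εℤ` lying in `(a+ε, b−ε)` has mean `(2ε)⁻¹ ∫_{(a+ε,b−ε)} h`, so for some shift it is at most
that. At a lattice point with `h < 1` we have `∫_{I_ε(x)} |g| = 2h`, and these intervals are
disjoint; at the remaining lattice points `h = 1`, so each of them costs `2 = 2h`.
-/

open MeasureTheory Filter Set Topology
open scoped ENNReal NNReal

noncomputable section

/-- Integral of a real function against a finite signed (Radon) measure. -/
def sInt (μ : MeasureTheory.SignedMeasure ℝ) (φ : ℝ → ℝ) : ℝ :=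
  (∫ x, φ x ∂μ.toJordanDecomposition.posPart) -
    ∫ x, φ x ∂μ.toJordanDecomposition.negPart

/-- The cohesive energy density `f(t) = c₀ t` for `t < 1` and `f(t) = c₀` for `t ≥ 1`. -/
def fcut (c₀ t : ℝ) : ℝ := if t < 1 then c₀ * t else c₀

/-- The flat norm of a signed measure relative to the open set `A`:
the supremum of integrals against `W^{1,∞}_0(A)` test functions of norm at most one. -/
def flatNormOn (A : Set ℝ) (μ : SignedMeasure ℝ) : ℝ :=
  sSup { r | ∃ φ : ℝ → ℝ, LipschitzWith 1 φ ∧ (∀ x, |φ x| ≤ 1) ∧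
    (∀ x ∉ A, φ x = 0) ∧ r = sInt μ φ }

/-- The flat norm on the interval `(a,b)`. -/
def flatNorm (a b : ℝ) (μ : SignedMeasure ℝ) : ℝ := flatNormOn (Set.Ioo a b) μ

/-- The `W^{-1,q}` norm on the open set `A`, where `p = q'` is the conjugate exponent:
the supremum of integrals against (smooth) `W^{1,p}_0(A)` test functions of norm ≤ 1. -/
def negSobNormOn (A : Set ℝ) (p : ℝ≥0∞) (μ : SignedMeasure ℝ) : ℝ :=
  sSup { r | ∃ φ : ℝ → ℝ, ContDiff ℝ 1 φ ∧ (∀ x ∉ A, φ x = 0) ∧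
    eLpNorm φ p (volume.restrict A) + eLpNorm (deriv φ) p (volume.restrict A) ≤ 1 ∧
    r = sInt μ φ }

/-- `u ∈ W^{1,1}(a,b)` with (weak) derivative `u'`: `u` is absolutely continuous on
`(a,b)` with integrable derivative `u'`. -/
def IsW11 (a b : ℝ) (u u' : ℝ → ℝ) : Prop :=
  IntegrableOn u (Set.Ioo a b) ∧ IntegrableOn u' (Set.Ioo a b) ∧
    ∀ x ∈ Set.Ioo a b, ∀ y ∈ Set.Ioo a b, x ≤ y → u y - u x = ∫ t in x..y, u' t

/-- `‖u‖_{L^∞(a,b)} ≤ K`. -/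
def LinftyLE (a b K : ℝ) (u : ℝ → ℝ) : Prop :=
  ∀ᵐ x ∂(volume.restrict (Set.Ioo a b)), |u x| ≤ K

/-- `Du` is the distributional derivative (a finite signed measure concentrated on `A`)
of `u` on the open set `A`; this encodes `u ∈ BV(A)` with derivative measure `Du`. -/
def HasDerivMeasureOn (A : Set ℝ) (u : ℝ → ℝ) (Du : SignedMeasure ℝ) : Prop :=
  Du = Du.restrict A ∧
    ∀ φ : ℝ → ℝ, ContDiff ℝ 1 φ → HasCompactSupport φ → tsupport φ ⊆ A →
      ∫ x in A, u x * deriv φ x = - sInt Du φ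

/-- Right limit `u(x+)`. -/
def rlim (u : ℝ → ℝ) (x : ℝ) : ℝ := limUnder (𝓝[>] x) u
/-- Left limit `u(x−)`. -/
def llim (u : ℝ → ℝ) (x : ℝ) : ℝ := limUnder (𝓝[<] x) u

/-- The jump set `J_u` of `u` in `(a,b)`. -/
def jumpSet (a b : ℝ) (u : ℝ → ℝ) : Set ℝ :=
  {x | x ∈ Set.Ioo a b ∧ (∃ l, Tendsto u (𝓝[<] x) (𝓝 l)) ∧
    (∃ r, Tendsto u (𝓝[>] x) (𝓝 r)) ∧ rlim u x ≠ llim u x}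

/-- The jump `[u](x) = u(x+) − u(x−)`. -/
def jump (u : ℝ → ℝ) (x : ℝ) : ℝ := rlim u x - llim u x

/-- The Cantor part `D^c u` of the derivative measure `Du`. -/
def cantorPart (a b : ℝ) (u : ℝ → ℝ) (Du : SignedMeasure ℝ) : SignedMeasure ℝ :=
  (Du.singularPart volume).restrict (jumpSet a b u)ᶜ

/-- The average `⨍_{I_ε(x) ∩ (a,b)} |g| dt`. -/
def avgAbs (a b ε : ℝ) (g : ℝ → ℝ) (x : ℝ) : ℝ :=
  ⨍ t in Set.Ioo (x - ε) (x + ε) ∩ Set.Ioo a b, |g t|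

/-- The value of the approximating energies, localized to the set `A`. -/
def EpsCoreOn (a b c₀ ε : ℝ) (A : Set ℝ) (u' g : ℝ → ℝ) : ℝ :=
  (∫ x in A, (u' x - g x) ^ 2) + (1 / ε) * ∫ x in A, fcut c₀ (ε * avgAbs a b ε g x)

/-- The approximating (localized) energy `E_ε(u,γ,A)` for `K < ∞`: it is `∞` unless
`u ∈ W^{1,1}(a,b)`, `‖u‖_∞ ≤ K`, `γ = g·L¹` with `g ∈ L¹(a,b)` and `u' - g ∈ L²(a,b)`.
(The infimum runs over all the possible representations; they all yield the same value.) -/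
def EepsLoc (a b c₀ K ε : ℝ) (A : Set ℝ) (u : ℝ → ℝ) (γ : SignedMeasure ℝ) : ℝ≥0∞ :=
  ⨅ (u' : ℝ → ℝ) (g : ℝ → ℝ) (_ : IsW11 a b u u') (_ : LinftyLE a b K u)
    (_ : IntegrableOn g (Set.Ioo a b))
    (_ : γ = (volume.restrict (Set.Ioo a b)).withDensityᵥ g)
    (_ : MemLp (fun x => u' x - g x) 2 (volume.restrict (Set.Ioo a b))),
    ENNReal.ofReal (EpsCoreOn a b c₀ ε A u' g)

/-- The approximating energy `E_ε(u,γ)` for `K < ∞`. -/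
def Eeps (a b c₀ K ε : ℝ) (u : ℝ → ℝ) (γ : SignedMeasure ℝ) : ℝ≥0∞ :=
  EepsLoc a b c₀ K ε (Set.Ioo a b) u γ

/-- The value of the limiting energy `E` for `u ∈ BV(a,b)` with derivative measure `Du`
and inelastic density `g`:
`∫ |u'-g|² + c₀ ∫ |g| + 2 Σ_{x ∈ J_u} f(|[u](x)|/2) + c₀ |D^c u|(a,b)`. -/
def ElimVal (a b c₀ : ℝ) (u : ℝ → ℝ) (Du : SignedMeasure ℝ) (g : ℝ → ℝ) : ℝ≥0∞ :=
  ENNReal.ofReal (∫ x in Set.Ioo a b, (Du.rnDeriv volume x - g x) ^ 2)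
    + ENNReal.ofReal (c₀ * ∫ x in Set.Ioo a b, |g x|)
    + 2 * ∑' p : (jumpSet a b u), ENNReal.ofReal (fcut c₀ (|jump u ↑p| / 2))
    + ENNReal.ofReal c₀ *
        MeasureTheory.SignedMeasure.totalVariation (cantorPart a b u Du) (Set.Ioo a b)

/-- The limiting energy `E(u,γ)` for `K < ∞`: it is `∞` unless `u ∈ BV(a,b)`,
`‖u‖_∞ ≤ K`, `γ = D^s u + g·L¹` with `g ∈ L¹(a,b)` and `u' - g ∈ L²(a,b)`. -/
def Elim (a b c₀ K : ℝ) (u : ℝ → ℝ) (γ : SignedMeasure ℝ) : ℝ≥0∞ :=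
  ⨅ (Du : SignedMeasure ℝ) (g : ℝ → ℝ)
    (_ : IntegrableOn u (Set.Ioo a b)) (_ : HasDerivMeasureOn (Set.Ioo a b) u Du)
    (_ : LinftyLE a b K u) (_ : IntegrableOn g (Set.Ioo a b))
    (_ : γ = Du.singularPart volume + (volume.restrict (Set.Ioo a b)).withDensityᵥ g)
    (_ : MemLp (fun x => Du.rnDeriv volume x - g x) 2 (volume.restrict (Set.Ioo a b))),
    ElimVal a b c₀ u Du g

/-- Convergence `u_ε → u` in `L¹(a,b)` as `ε → 0⁺`. -/
def TendstoL1 (a b : ℝ) (uε : ℝ → ℝ → ℝ) (u : ℝ → ℝ) : Prop :=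
  Tendsto (fun ε => ∫ x in Set.Ioo a b, |uε ε x - u x|) (𝓝[>] (0:ℝ)) (𝓝 0)

/-- Convergence `γ_ε → γ` in the flat norm as `ε → 0⁺`. -/
def TendstoFlat (a b : ℝ) (γε : ℝ → SignedMeasure ℝ) (γ : SignedMeasure ℝ) : Prop :=
  Tendsto (fun ε => flatNorm a b (γε ε - γ)) (𝓝[>] (0:ℝ)) (𝓝 0)

/-- The localized Γ-lower limit `E'(u,γ,A)`. -/
def GammaLowerLoc (a b c₀ K : ℝ) (A : Set ℝ) (u : ℝ → ℝ) (γ : SignedMeasure ℝ) : ℝ≥0∞ :=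
  ⨅ (uε : ℝ → ℝ → ℝ) (γε : ℝ → SignedMeasure ℝ)
    (_ : TendstoL1 a b uε u) (_ : TendstoFlat a b γε γ),
    liminf (fun ε => EepsLoc a b c₀ K ε A (uε ε) (γε ε)) (𝓝[>] (0:ℝ))

/-- The Γ-upper limit `E''(u,γ)`. -/
def GammaUpper (a b c₀ K : ℝ) (u : ℝ → ℝ) (γ : SignedMeasure ℝ) : ℝ≥0∞ :=
  ⨅ (uε : ℝ → ℝ → ℝ) (γε : ℝ → SignedMeasure ℝ)
    (_ : TendstoL1 a b uε u) (_ : TendstoFlat a b γε γ),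
    limsup (fun ε => Eeps a b c₀ K ε (uε ε) (γε ε)) (𝓝[>] (0:ℝ))

/-! ### The unrestricted case `K = ∞` (extended-real valued displacements) -/

/-- The finiteness set `F(u)` of `u : (a,b) → ℝ̄`. -/
def finSet (a b : ℝ) (u : ℝ → EReal) : Set ℝ :=
  interior {x | x ∈ Set.Ioo a b ∧ u x ≠ ⊤ ∧ u x ≠ ⊥}

/-- Right limit `u(x+)` in `ℝ̄`. -/
def erlim (u : ℝ → EReal) (x : ℝ) : EReal := limUnder (𝓝[>] x) u
/-- Left limit `u(x−)` in `ℝ̄`. -/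
def ellim (u : ℝ → EReal) (x : ℝ) : EReal := limUnder (𝓝[<] x) u

/-- The jump set of `u : (a,b) → ℝ̄`. -/
def jumpSetE (a b : ℝ) (u : ℝ → EReal) : Set ℝ :=
  {x | x ∈ Set.Ioo a b ∧ (∃ l, Tendsto u (𝓝[<] x) (𝓝 l)) ∧
    (∃ r, Tendsto u (𝓝[>] x) (𝓝 r)) ∧ erlim u x ≠ ellim u x}

/-- `f(|r − l|/2)` for one-sided limits `l, r ∈ ℝ̄`, with the convention `f(∞) = c₀`. -/
def fjumpE (c₀ : ℝ) (l r : EReal) : ℝ :=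
  if l = ⊤ ∨ l = ⊥ ∨ r = ⊤ ∨ r = ⊥ then c₀ else fcut c₀ (|r.toReal - l.toReal| / 2)

/-- `u ∈ BV_{∞,P}(a,b)` with representation data `u = w + Σᵢ αᵢ χ_{(x_{i-1}, x_i)}`. -/
def IsBVinftyRep (a b : ℝ) (u : ℝ → EReal) (m : ℕ) (x : Fin (m + 1) → ℝ)
    (α : Fin m → EReal) (w : ℝ → ℝ) : Prop :=
  StrictMono x ∧ x 0 = a ∧ x (Fin.last m) = b ∧
    (∀ i, α i = ⊥ ∨ α i = 0 ∨ α i = ⊤) ∧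
    IntegrableOn w (Set.Ioo a b) ∧ (∃ Dw, HasDerivMeasureOn (Set.Ioo a b) w Dw) ∧
    ∀ t ∈ Set.Ioo a b,
      u t = (w t : EReal) +
        ∑ i : Fin m, (if t ∈ Set.Ioo (x i.castSucc) (x i.succ) then α i else 0)

/-- The value of the extended limiting energy for `u ∈ BV_{∞,P}(a,b)` with `BV` part `w`
(whose derivative measure is `Dw`) and inelastic density `g`. -/
def ElimInfVal (a b c₀ : ℝ) (u : ℝ → EReal) (Dw : SignedMeasure ℝ) (g : ℝ → ℝ) : ℝ≥0∞ :=
  ENNReal.ofReal (∫ t in finSet a b u, (Dw.rnDeriv volume t - g t) ^ 2)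
    + ENNReal.ofReal (c₀ * ∫ t in finSet a b u, |g t|)
    + 2 * ∑' p : (jumpSetE a b u), ENNReal.ofReal (fjumpE c₀ (ellim u ↑p) (erlim u ↑p))
    + ENNReal.ofReal c₀ *
        MeasureTheory.SignedMeasure.totalVariation
          ((Dw.singularPart volume).restrict (jumpSetE a b u)ᶜ) (finSet a b u)

/-- The extended limiting energy `E(u,γ)` for `K = ∞`: it is `∞` unless
`u ∈ BV_{∞,P}(a,b)`, `g ∈ L¹(F(u))`, `γ⌊F(u) = (D^s u + g·L¹)⌊F(u)` and
`u' − g ∈ L²(F(u))`. -/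
def ElimInf (a b c₀ : ℝ) (u : ℝ → EReal) (γ : SignedMeasure ℝ) : ℝ≥0∞ :=
  ⨅ (m : ℕ) (x : Fin (m + 1) → ℝ) (α : Fin m → EReal) (w : ℝ → ℝ)
    (Dw : SignedMeasure ℝ) (g : ℝ → ℝ)
    (_ : IsBVinftyRep a b u m x α w)
    (_ : HasDerivMeasureOn (Set.Ioo a b) w Dw)
    (_ : IntegrableOn g (finSet a b u))
    (_ : γ.restrict (finSet a b u) =
      (Dw.singularPart volume + (volume.restrict (finSet a b u)).withDensityᵥ g).restrict
        (finSet a b u))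
    (_ : MemLp (fun t => Dw.rnDeriv volume t - g t) 2 (volume.restrict (finSet a b u))),
    ElimInfVal a b c₀ u Dw g

/-- The approximating energy `E_ε(u,γ)` for `K = ∞`, acting on `u : (a,b) → ℝ̄`. -/
def EepsInf (a b c₀ ε : ℝ) (u : ℝ → EReal) (γ : SignedMeasure ℝ) : ℝ≥0∞ :=
  ⨅ (v : ℝ → ℝ) (u' : ℝ → ℝ) (g : ℝ → ℝ) (_ : ∀ t ∈ Set.Ioo a b, u t = (v t : EReal))
    (_ : IsW11 a b v u') (_ : IntegrableOn g (Set.Ioo a b))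
    (_ : γ = (volume.restrict (Set.Ioo a b)).withDensityᵥ g)
    (_ : MemLp (fun t => u' t - g t) 2 (volume.restrict (Set.Ioo a b))),
    ENNReal.ofReal (EpsCoreOn a b c₀ ε (Set.Ioo a b) u' g)

/-- Convergence `(u_ε, γ_ε) → (u, γ)` in `L⁰((a,b), ℝ̄) × M(a,b)`:
`u_ε → u` a.e. and `γ_ε⌊A → γ⌊A` in the flat norm for every open `A ⋐ F(u) ∖ S`,
for some finite set `S ⊆ (a,b)` of partition points. -/
def TendstoL0 (a b : ℝ) (uε : ℝ → ℝ → EReal) (γε : ℝ → SignedMeasure ℝ)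
    (u : ℝ → EReal) (γ : SignedMeasure ℝ) : Prop :=
  (∀ᵐ t ∂(volume.restrict (Set.Ioo a b)),
      Tendsto (fun ε => uε ε t) (𝓝[>] (0:ℝ)) (𝓝 (u t))) ∧
    ∃ S : Finset ℝ, ↑S ⊆ Set.Ioo a b ∧
      ∀ A : Set ℝ, IsOpen A → IsCompact (closure A) → closure A ⊆ finSet a b u \ ↑S →
        Tendsto (fun ε => flatNormOn A (((γε ε) - γ).restrict A)) (𝓝[>] (0:ℝ)) (𝓝 0)

/-- The minimal approximating energy `Ẽ_ε(u)` (for `K < ∞`). -/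
def EepsMin (a b c₀ K ε : ℝ) (u : ℝ → ℝ) : ℝ≥0∞ :=
  ⨅ γ : SignedMeasure ℝ, Eeps a b c₀ K ε u γ

/-- The minimal limiting energy `Ẽ(u)` (for `K < ∞`). -/
def ElimMin (a b c₀ K : ℝ) (u : ℝ → ℝ) : ℝ≥0∞ :=
  ⨅ γ : SignedMeasure ℝ, Elim a b c₀ K u γ

/-- The minimal approximating energy `Ẽ_ε(u)` for `K = ∞`. -/
def EepsInfMin (a b c₀ ε : ℝ) (u : ℝ → EReal) : ℝ≥0∞ :=
  ⨅ γ : SignedMeasure ℝ, EepsInf a b c₀ ε u γ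

/-- The minimal limiting energy `Ẽ(u)` for `K = ∞`. -/
def ElimInfMin (a b c₀ : ℝ) (u : ℝ → EReal) : ℝ≥0∞ :=
  ⨅ γ : SignedMeasure ℝ, ElimInf a b c₀ u γ

/-- The soft-thresholding function `g*` associated with `h` and `c₀`. -/
def softThresh (c₀ : ℝ) (h : ℝ → ℝ) : ℝ → ℝ := fun x =>
  if c₀ / 2 < |h x| then h x - Real.sign (h x) * (c₀ / 2) else 0

open Classical in
/-- The functional `g ↦ ∫ |h−g|² + c₀ ∫ |g|` on `(a,b)`, with value `∞` if `h − g ∉ L²`. -/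
def softJ (a b c₀ : ℝ) (h g : ℝ → ℝ) : ℝ≥0∞ :=
  if MemLp (fun x => h x - g x) 2 (volume.restrict (Set.Ioo a b)) then
    ENNReal.ofReal (∫ x in Set.Ioo a b, (h x - g x) ^ 2)
      + ENNReal.ofReal (c₀ * ∫ x in Set.Ioo a b, |g x|)
  else ⊤

theorem lintegral_Ioc_tsum_comp_add_mul_intCast {p : ℝ} (hp : 0 < p) {f : ℝ → ℝ≥0∞}
    (hf : Measurable f) :
    ∫⁻ s in Ioc 0 p, ∑' n : ℤ, f (s + p * n) = ∫⁻ x, f x := by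
  let e : ℤ ≃ AddSubgroup.zmultiples p :=
    Equiv.ofBijective _ (Equiv.ofInjective (fun n : ℤ => n • p)
      (zsmul_left_strictMono hp).injective).bijective
  have hfd := (isAddFundamentalDomain_Ioc hp 0).lintegral_eq_tsum'' f
  rw [zero_add] at hfd
  rw [hfd, ← e.tsum_eq, lintegral_tsum (f := fun (n : ℤ) s => f (s + p * n))
    fun n => (hf.comp (measurable_add_const _)).aemeasurable]
  congr! 4 with n s
  show f (s + p * n) = f (n • p + s)
  rw [zsmul_eq_mul, add_comm, mul_comm]

theorem exists_mul_tsum_comp_add_mul_intCast_le {p : ℝ} (hp : 0 < p) {f : ℝ → ℝ≥0∞}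
    (hf : Measurable f) :
    ∃ s, ENNReal.ofReal p * ∑' n : ℤ, f (s + p * n) ≤ ∫⁻ x, f x := by
  have hvol : volume (Ioc 0 p) = ENNReal.ofReal p := by simp
  obtain ⟨s, -, hs⟩ := exists_le_setLAverage (μ := volume) (s := Ioc 0 p)
    (f := fun s => ∑' n : ℤ, f (s + p * n)) (by simp [hp]) (by simp)
    (Measurable.tsum fun n => hf.comp (measurable_add_const _)).aemeasurable
  refine ⟨s, ?_⟩
  rw [setLAverage_eq, lintegral_Ioc_tsum_comp_add_mul_intCast hp hf, hvol] at hs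
  calc ENNReal.ofReal p * ∑' n : ℤ, f (s + p * n)
      ≤ ENNReal.ofReal p * ((∫⁻ x, f x) / ENNReal.ofReal p) := by gcongr
    _ = ∫⁻ x, f x := ENNReal.mul_div_cancel (by simp [hp]) ENNReal.ofReal_ne_top

-- The paper's grid `G_ε` is `gridIn x_ε (2 * ε) (Ioo (a + ε) (b - ε))`.
def gridIn (s p : ℝ) (U : Set ℝ) : Set ℝ := {y | (∃ α : ℤ, y = s + p * α) ∧ y ∈ U}

theorem finite_setOf_add_mul_intCast_mem {p : ℝ} (hp : p ≠ 0) (s : ℝ) {U : Set ℝ}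
    (hU : Bornology.IsBounded U) : {n : ℤ | s + p * n ∈ U}.Finite := by
  have htend : Tendsto (fun n : ℤ => s + p * n) cofinite (cocompact ℝ) :=
    ((Homeomorph.mulLeft₀ p hp).trans (Homeomorph.addLeft s)).isClosedEmbedding
      |>.tendsto_cocompact.comp Int.tendsto_coe_cofinite
  have := htend hU.isCompact_closure.compl_mem_cocompact
  rw [mem_map, mem_cofinite] at this
  exact this.subset fun n hn hn' => hn' (subset_closure hn)

theorem gridIn_finite {p : ℝ} (hp : p ≠ 0) (s : ℝ) {U : Set ℝ} (hU : Bornology.IsBounded U) :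
    (gridIn s p U).Finite := by
  refine ((finite_setOf_add_mul_intCast_mem hp s hU).image fun n : ℤ => s + p * n).subset ?_
  rintro _ ⟨⟨α, rfl⟩, hα⟩
  exact ⟨α, hα, rfl⟩

theorem tsum_indicator_comp_add_mul_intCast {p : ℝ} (hp : p ≠ 0) {s : ℝ} {U : Set ℝ}
    {T : Finset ℝ} (hT : ↑T = gridIn s p U) (φ : ℝ → ℝ≥0∞) :
    ∑' n : ℤ, U.indicator φ (s + p * n) = ∑ y ∈ T, φ y := by
  have hinj : Function.Injective fun n : ℤ => s + p * n := fun n m h => by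
    simpa [hp] using h
  have hsupp : Function.support ((↑T : Set ℝ).indicator φ) ⊆ range fun n : ℤ => s + p * n :=
    fun y hy => by
      obtain ⟨⟨α, rfl⟩, -⟩ := hT ▸ support_indicator_subset hy
      exact ⟨α, rfl⟩
  rw [sum_eq_tsum_indicator, ← hinj.tsum_eq hsupp]
  congr! 2 with n
  by_cases hn : s + p * n ∈ U <;> simp [hT, gridIn, hn]

theorem exists_gridIn_sum_le {p : ℝ} (hp : 0 < p) {U : Set ℝ} (hU : MeasurableSet U)
    (hUb : Bornology.IsBounded U) {h : ℝ → ℝ} (hm : Measurable h) (h0 : ∀ x ∈ U, 0 ≤ h x)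
    (hi : IntegrableOn h U) :
    ∃ s, ∃ T : Finset ℝ, ↑T = gridIn s p U ∧ p * ∑ y ∈ T, h y ≤ ∫ x in U, h x := by
  obtain ⟨s, hs⟩ := exists_mul_tsum_comp_add_mul_intCast_le hp
    ((hm.ennreal_ofReal).indicator hU)
  have hfin := gridIn_finite hp.ne' s hUb
  refine ⟨s, hfin.toFinset, hfin.coe_toFinset, ?_⟩
  have hT0 : ∀ y ∈ hfin.toFinset, 0 ≤ h y := fun y hy => h0 y ((hfin.mem_toFinset.1 hy).2)
  rw [tsum_indicator_comp_add_mul_intCast hp.ne' hfin.coe_toFinset, lintegral_indicator hU,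
    ← ofReal_integral_eq_lintegral_ofReal hi ((ae_restrict_iff' hU).2 (ae_of_all _ h0)),
    ← ENNReal.ofReal_sum_of_nonneg hT0, ← ENNReal.ofReal_mul hp.le] at hs
  exact (ENNReal.ofReal_le_ofReal_iff (setIntegral_nonneg hU h0)).1 hs

theorem pairwiseDisjoint_gridIn_Ioo {ε : ℝ} (hε : 0 ≤ ε) (s : ℝ) (U : Set ℝ) :
    (gridIn s (2 * ε) U).PairwiseDisjoint fun y => Ioo (y - ε) (y + ε) := by
  have key : ∀ α β : ℤ, α < β →
      Disjoint (Ioo (s + 2 * ε * α - ε) (s + 2 * ε * α + ε))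
        (Ioo (s + 2 * ε * β - ε) (s + 2 * ε * β + ε)) := fun α β hαβ => by
    have : (α : ℝ) + 1 ≤ β := by exact_mod_cast hαβ
    exact (Ioc_disjoint_Ioc_of_le (by nlinarith)).mono Ioo_subset_Ioc_self Ioo_subset_Ioc_self
  rintro _ ⟨⟨α, rfl⟩, -⟩ _ ⟨⟨β, rfl⟩, -⟩ hne
  rcases lt_trichotomy α β with h | rfl | h
  · exact key α β h
  · exact absurd rfl hne
  · exact (key β α h).symm

theorem continuous_setIntegral_Ioo_sub_add {F : ℝ → ℝ} (hF : Integrable F) {ε : ℝ}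
    (hε : 0 ≤ ε) : Continuous fun x => ∫ t in Ioo (x - ε) (x + ε), F t := by
  have hprim : Continuous fun y => ∫ t in (0 : ℝ)..y, F t := hF.continuous_primitive 0
  have heq : ∀ x, ∫ t in Ioo (x - ε) (x + ε), F t =
      (∫ t in (0 : ℝ)..(x + ε), F t) - ∫ t in (0 : ℝ)..(x - ε), F t := fun x => by
    rw [intervalIntegral.integral_interval_sub_left hF.intervalIntegrable hF.intervalIntegrable,
      intervalIntegral.integral_of_le (by linarith), integral_Ioc_eq_integral_Ioo]
  simp only [heq]
  exact (hprim.comp (continuous_add_const ε)).sub (hprim.comp (continuous_sub_right ε))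

theorem exists_gridIn_integral_add_two_mul_ncard_le {ε : ℝ} (hε : 0 < ε) {U : Set ℝ}
    (hU : MeasurableSet U) (hUb : Bornology.IsBounded U) {φ : ℝ → ℝ} (hφ : Integrable φ)
    (hφ0 : ∀ t, 0 ≤ φ t) :
    ∃ s, ∃ G' ⊆ gridIn s (2 * ε) U, (gridIn s (2 * ε) U \ G').Finite ∧
      (∫ t in ⋃ y ∈ G', Ioo (y - ε) (y + ε), φ t) + 2 * ((gridIn s (2 * ε) U \ G').ncard : ℝ) ≤
        (1 / ε) * ∫ x in U, min ((∫ t in Ioo (x - ε) (x + ε), φ t) / 2) 1 := by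
  classical
  set h : ℝ → ℝ := fun x => min ((∫ t in Ioo (x - ε) (x + ε), φ t) / 2) 1
  have h0 : ∀ x, 0 ≤ h x := fun x =>
    le_min (div_nonneg (integral_nonneg fun t => hφ0 t) zero_le_two) zero_le_one
  have hm : Measurable h :=
    ((continuous_setIntegral_Ioo_sub_add hφ hε.le).div_const 2 |>.min continuous_const).measurable
  have hi : IntegrableOn h U := Measure.integrableOn_of_bounded (M := 1) hUb.measure_lt_top.ne
    hm.aestronglyMeasurable (ae_of_all _ fun x => by
      rw [Real.norm_eq_abs, abs_of_nonneg (h0 x)]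
      exact min_le_right _ _)
  obtain ⟨s, T, hT, hsum⟩ := exists_gridIn_sum_le (by positivity : 0 < 2 * ε) hU hUb hm
    (fun x _ => h0 x) hi
  have hin : ∀ y ∈ T.filter (h · < 1), ∫ t in Ioo (y - ε) (y + ε), φ t = 2 * h y := by
    intro y hy
    have hlt := (min_lt_iff.1 (Finset.mem_filter.1 hy).2).resolve_right (lt_irrefl 1)
    simp only [h, min_eq_left hlt.le]
    ring
  have hout : ∀ y ∈ T.filter (¬ h · < 1), h y = 1 := fun y hy =>
    le_antisymm (min_le_right _ _) (not_lt.1 (Finset.mem_filter.1 hy).2)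
  have hsub : ↑(T.filter (h · < 1)) ⊆ (↑T : Set ℝ) := Finset.coe_subset.2 (Finset.filter_subset _ _)
  refine ⟨s, ↑(T.filter (h · < 1)), ?_⟩
  rw [← hT, ← Finset.coe_sdiff, ← Finset.filter_not, ncard_coe_finset, Finset.set_biUnion_coe,
    integral_biUnion_finset _ (fun _ _ => measurableSet_Ioo)
      ((pairwiseDisjoint_gridIn_Ioo hε.le s U).subset (hT ▸ hsub)) (fun y _ => hφ.integrableOn)]
  refine ⟨hsub, Finset.finite_toSet _, ?_⟩
  calc (∑ y ∈ T.filter (h · < 1), ∫ t in Ioo (y - ε) (y + ε), φ t)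
        + 2 * ((T.filter (¬ h · < 1)).card : ℝ)
      = 2 * ∑ y ∈ T, h y := by
        rw [Finset.sum_congr rfl hin, Finset.card_eq_sum_ones, Nat.cast_sum, Nat.cast_one,
          ← Finset.sum_congr rfl hout, ← Finset.mul_sum, ← mul_add,
          Finset.sum_filter_add_sum_filter_not]
    _ ≤ (1 / ε) * ∫ x in U, h x := by
        rw [div_mul_eq_mul_div, one_mul, le_div_iff₀ hε]
        linarith

theorem fcut_eq_mul_min (c₀ t : ℝ) : fcut c₀ t = c₀ * min t 1 := by
  unfold fcut
  split_ifs with h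
  · rw [min_eq_left h.le]
  · rw [min_eq_right (not_lt.1 h), mul_one]

theorem avgAbs_nonneg (a b ε : ℝ) (g : ℝ → ℝ) (x : ℝ) : 0 ≤ avgAbs a b ε g x :=
  integral_nonneg fun _ => abs_nonneg _

theorem measurable_avgAbs {a b ε : ℝ} (hε : 0 ≤ ε) {g : ℝ → ℝ}
    (hg : IntegrableOn g (Ioo a b)) : Measurable (avgAbs a b ε g) := by
  have hloc : ∀ φ : ℝ → ℝ, IntegrableOn φ (Ioo a b) → Continuous fun x =>
      ∫ t in Ioo (x - ε) (x + ε) ∩ Ioo a b, φ t := fun φ hφ => by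
    simp_rw [← setIntegral_indicator measurableSet_Ioo]
    exact continuous_setIntegral_Ioo_sub_add
      ((integrable_indicator_iff measurableSet_Ioo).2 hφ) hε
  have hvol : Continuous fun x => volume.real (Ioo (x - ε) (x + ε) ∩ Ioo a b) := by
    simpa using hloc (fun _ => 1) (integrableOn_const (by simp))
  have havg : avgAbs a b ε g = fun x => (volume.real (Ioo (x - ε) (x + ε) ∩ Ioo a b))⁻¹ *
      ∫ t in Ioo (x - ε) (x + ε) ∩ Ioo a b, |g t| := by
    ext x
    rw [avgAbs, setAverage_eq, smul_eq_mul]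
  rw [havg]
  exact hvol.measurable.inv.mul (hloc _ hg.abs).measurable

theorem integrableOn_min_mul_avgAbs {a b ε : ℝ} (hε : 0 ≤ ε) {g : ℝ → ℝ}
    (hg : IntegrableOn g (Ioo a b)) :
    IntegrableOn (fun x => min (ε * avgAbs a b ε g x) 1) (Ioo a b) :=
  Measure.integrableOn_of_bounded (M := 1) (by simp)
    ((measurable_avgAbs hε hg).const_mul ε |>.min measurable_const).aestronglyMeasurable
    (ae_of_all _ fun x => by
      rw [Real.norm_eq_abs, abs_of_nonneg (le_min (mul_nonneg hε (avgAbs_nonneg ..)) zero_le_one)]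
      exact min_le_right _ _)

theorem mul_avgAbs_of_Ioo_subset {a b ε : ℝ} (hε : 0 < ε) (g : ℝ → ℝ) {y : ℝ}
    (hy : Ioo (y - ε) (y + ε) ⊆ Ioo a b) :
    ε * avgAbs a b ε g y = (∫ t in Ioo (y - ε) (y + ε), |g t|) / 2 := by
  rw [avgAbs, setAverage_eq, smul_eq_mul, inter_eq_left.2 hy,
    Real.volume_real_Ioo_of_le (by linarith), show y + ε - (y - ε) = 2 * ε by ring]
  field_simp

theorem eigendamage_grid_lemma_general
    (a b c₀ : ℝ) (hc₀ : 0 < c₀)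
    (g : ℝ → ℝ) (hg : IntegrableOn g (Set.Ioo a b)) (ε : ℝ) (hε : 0 < ε) :
    ∃ xε : ℝ, ∃ Gε' : Set ℝ,
      Gε' ⊆ {y : ℝ | (∃ α : ℤ, y = xε + 2 * ε * α) ∧ y ∈ Set.Ioo (a + ε) (b - ε)} ∧
      ({y : ℝ | (∃ α : ℤ, y = xε + 2 * ε * α) ∧ y ∈ Set.Ioo (a + ε) (b - ε)} \ Gε').Finite ∧
      (∫ t in ⋃ x ∈ Gε', Set.Ioo (x - ε) (x + ε), |g t|) +
          2 * (({y : ℝ | (∃ α : ℤ, y = xε + 2 * ε * α) ∧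
                  y ∈ Set.Ioo (a + ε) (b - ε)} \ Gε').ncard : ℝ) ≤
        (1 / (c₀ * ε)) * ∫ x in Set.Ioo a b, fcut c₀ (ε * avgAbs a b ε g x) := by
  have hcell : ∀ y ∈ Ioo (a + ε) (b - ε), Ioo (y - ε) (y + ε) ⊆ Ioo a b := fun y hy =>
    Ioo_subset_Ioo (by linarith [hy.1]) (by linarith [hy.2])
  obtain ⟨s, G', hG', hfin, hle⟩ := exists_gridIn_integral_add_two_mul_ncard_le hε
    measurableSet_Ioo (Metric.isBounded_Ioo _ _)
    ((integrable_indicator_iff measurableSet_Ioo).2 hg.abs)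
    (indicator_nonneg fun t _ => abs_nonneg (g t))
  refine ⟨s, G', hG', hfin, ?_⟩
  have hunion : (⋃ y ∈ G', Ioo (y - ε) (y + ε)) ⊆ Ioo a b :=
    iUnion₂_subset fun y hy => hcell y (hG' hy).2
  have hint : ∀ x ∈ Ioo (a + ε) (b - ε), min ((∫ t in Ioo (x - ε) (x + ε),
      (Ioo a b).indicator (fun t => |g t|) t) / 2) 1 = min (ε * avgAbs a b ε g x) 1 :=
    fun x hx => by
      rw [setIntegral_indicator measurableSet_Ioo, inter_eq_left.2 (hcell x hx),
        mul_avgAbs_of_Ioo_subset hε g (hcell x hx)]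
  rw [setIntegral_indicator measurableSet_Ioo, inter_eq_left.2 hunion,
    setIntegral_congr_fun measurableSet_Ioo hint] at hle
  refine hle.trans ?_
  simp only [fcut_eq_mul_min]
  rw [integral_const_mul, show ∀ X : ℝ, 1 / (c₀ * ε) * (c₀ * X) = 1 / ε * X from fun X => by
    field_simp]
  gcongr
  · exact ae_of_all _ fun x => le_min (mul_nonneg hε.le (avgAbs_nonneg ..)) zero_le_one
  · exact integrableOn_min_mul_avgAbs hε.le hg
  all_goals linarith

/-- **Lemma (grid selection).**
For `g ∈ L¹(a,b)` and `ε > 0` there is `x_ε ∈ ℝ` such that the grid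
`G_ε = {x_ε + 2εα : α ∈ ℤ} ∩ (a+ε, b−ε)` contains a subset `G'_ε ⊆ G_ε` with
`∫_{∪{I_ε(x) : x ∈ G'_ε}} |g| + 2 #(G_ε ∖ G'_ε) ≤ (1/(c₀ε)) ∫_a^b f(ε ⨍_{I_ε(x)∩(a,b)} |g|) dx`. -/
theorem eigendamage_grid_lemma
    (a b c₀ : ℝ) (ha : 0 < a) (hab : a < b) (hc₀ : 0 < c₀)
    (g : ℝ → ℝ) (hg : IntegrableOn g (Set.Ioo a b)) (ε : ℝ) (hε : 0 < ε) :
    ∃ xε : ℝ, ∃ Gε' : Set ℝ,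
      Gε' ⊆ {y : ℝ | (∃ α : ℤ, y = xε + 2 * ε * α) ∧ y ∈ Set.Ioo (a + ε) (b - ε)} ∧
      ({y : ℝ | (∃ α : ℤ, y = xε + 2 * ε * α) ∧ y ∈ Set.Ioo (a + ε) (b - ε)} \ Gε').Finite ∧
      (∫ t in ⋃ x ∈ Gε', Set.Ioo (x - ε) (x + ε), |g t|) +
          2 * (({y : ℝ | (∃ α : ℤ, y = xε + 2 * ε * α) ∧
                  y ∈ Set.Ioo (a + ε) (b - ε)} \ Gε').ncard : ℝ) ≤
        (1 / (c₀ * ε)) * ∫ x in Set.Ioo a b, fcut c₀ (ε * avgAbs a b ε g x) :=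
  eigendamage_grid_lemma_general a b c₀ hc₀ g hg ε hε

end
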